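/- Let $I(C_1)$ be the ideal of a twisted cubic $C_1 \subset \mathbb{P}^3$ and let $T \supseteq I(C_1)$ be a graded ideal of $S = \mathbb{C}[X_0,\dots,X_3]$ such that $S/T$ is Artinian Gorenstein of socle degree $2d-4$ and $T$ contains the Jacobian ideal $J_F$ of a smooth degree-$d$ surface containing $C_1$. If $P \in T$ is a homogeneous polynomial not in $I(C_1)$, then $\deg(P) \ge d - 3$. -/

import Mathlib

/-!
Restriction to the twisted cubic `u ↦ [1 : u : u² : u³]` identifies forms of degree `n` modulo
`I(C₁)` with polynomials in `u` of degree at most `3n`. The form `P` restricts to a nonzero `p` of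
degree at most `3e`. Since the partials of `F` have no common zero, a generic linear combination
`G` of them restricts to a `g` of degree exactly `3(d-1)` (it does not vanish at the point
`[0:0:0:1]` at infinity) with no root in common with `p`. If `e < d - 3`, Bézout's identity in
`ℂ[u]` with degree control writes the restriction of any form of degree `2d - 4` as
`p * u' + g * v'` with cofactors liftable to forms of complementary degrees, so every such form lies
in `I(C₁) + (P, G) ⊆ T`, contradicting `dim (S/T)_{2d-4} = 1`.
-/

open MvPolynomial
open scoped Polynomial

noncomputable section

theorem MvPolynomial.IsHomogeneous.degree_of_mem_support {σ R : Type*} [CommSemiring R]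
    {g : MvPolynomial σ R} {n : ℕ} (hg : g.IsHomogeneous n) {m : σ →₀ ℕ} (hm : m ∈ g.support) :
    m.degree = n := by
  rw [Finsupp.degree_eq_weight_one]
  exact hg (mem_support_iff.mp hm)

theorem MvPolynomial.IsHomogeneous.eval_piSingle_one {σ R : Type*} [CommSemiring R] [Fintype σ]
    [DecidableEq σ] {g : MvPolynomial σ R} {n : ℕ} (hg : g.IsHomogeneous n) (i : σ) :
    eval (Pi.single i 1) g = coeff (Finsupp.single i n) g := by
  rw [eval_eq', Finset.sum_eq_single (Finsupp.single i n)]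
  · rw [Finset.prod_eq_one fun j _ => ?_, mul_one]
    rcases eq_or_ne j i with rfl | hj <;> simp [*]
  · intro m hm hne
    obtain ⟨j, hji, hj⟩ : ∃ j ≠ i, m j ≠ 0 := by
      by_contra! h
      have hm' : m = Finsupp.single i (m i) := by
        ext j
        rcases eq_or_ne j i with rfl | hj <;> simp [*]
      have hmi := hg.degree_of_mem_support hm
      rw [hm', Finsupp.degree_single] at hmi
      exact hne (hm'.trans (by rw [hmi]))
    rw [Finset.prod_eq_zero (Finset.mem_univ j) (by simp [hji, hj]), mul_zero]
  · intro h
    rw [notMem_support_iff.mp h, zero_mul]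

theorem MvPolynomial.isHomogeneous_linearCombination {ι σ R : Type*} [CommSemiring R] [Fintype ι]
    {f : ι → MvPolynomial σ R} {n : ℕ} (hf : ∀ j, (f j).IsHomogeneous n) (c : ι → R) :
    (Fintype.linearCombination R f c).IsHomogeneous n := by
  rw [Fintype.linearCombination_apply]
  exact Submodule.sum_mem (homogeneousSubmodule σ R n) fun j _ => Submodule.smul_mem _ _ (hf j)

theorem Module.Dual.exists_linearCombination_forall_ne_zero {ι κ K M : Type*} [Field K]
    [Infinite K] [AddCommGroup M] [Module K M] [Finite ι] [Fintype κ] (v : κ → M)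
    (φ : ι → Module.Dual K M) (h : ∀ i, ∃ j, φ i (v j) ≠ 0) :
    ∃ c : κ → K, ∀ i, φ i (Fintype.linearCombination K v c) ≠ 0 := by
  classical
  refine exists_forall_ne_zero_of_forall_exists
    (fun i => (φ i).comp (Fintype.linearCombination K v)) fun i => ?_
  obtain ⟨j, hj⟩ := h i
  exact ⟨Pi.single j 1, by simpa [Fintype.linearCombination_apply_single]⟩

theorem Polynomial.exists_eq_mul_add_mul_natDegree_le {K : Type*} [Field K] {p q r : K[X]}
    {a b N : ℕ} (hpq : IsCoprime p q) (hq : q ≠ 0) (hp : p.natDegree ≤ a) (hqb : q.natDegree = b)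
    (hr : r.natDegree ≤ N) (habN : a + b ≤ N + 1) :
    ∃ u v, r = p * u + q * v ∧ u.natDegree ≤ N - a ∧ v.natDegree ≤ N - b := by
  obtain ⟨x, y, hxy⟩ := hpq
  have hdiv := EuclideanDomain.div_add_mod (x * r) q
  set u := x * r % q
  set v := y * r + p * (x * r / q)
  have huv : r = p * u + q * v := by linear_combination (-p) * hdiv - r * hxy
  have hu : u = 0 ∨ u.natDegree < b := by
    rcases eq_or_ne u 0 with h | h
    · exact .inl h
    · exact .inr (hqb ▸ natDegree_lt_natDegree h (degree_mod_lt _ hq))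
  have hpu : (p * u).natDegree ≤ N := by
    rcases hu with h | h
    · simp [h]
    · exact natDegree_mul_le.trans (by omega)
  refine ⟨u, v, huv, ?_, ?_⟩
  · rcases hu with h | h
    · simp [h]
    · omega
  rcases eq_or_ne v 0 with hv | hv
  · simp [hv]
  have := natDegree_sub_le r (p * u)
  rw [← eq_sub_of_add_eq' huv.symm, natDegree_mul hq hv] at this
  omega

namespace TwistedCubic

variable (R : Type*) [CommRing R]

def ideal : Ideal (MvPolynomial (Fin 4) R) :=
  Ideal.span {X 0 * X 2 - X 1 ^ 2, X 1 * X 3 - X 2 ^ 2, X 0 * X 3 - X 1 * X 2}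

/-- Restriction of forms to the affine chart `u ↦ [1 : u : u² : u³]` of the twisted cubic. -/
def param : MvPolynomial (Fin 4) R →ₐ[R] R[X] :=
  aeval fun i => Polynomial.X ^ (i : ℕ)

def weight : (Fin 4 →₀ ℕ) →+ ℕ :=
  Finsupp.weight fun i : Fin 4 => (i : ℕ)

/-- Writing `w = 3q + r` with `r < 3` and assuming `w ≤ 3n`, this is `X₀^(n-q) X₃^q`, `X₀^(n-q-1) X₁ X₃^q` or
`X₀^(n-q-1) X₂ X₃^q` according as `r = 0, 1, 2`. -/
def stdMonomial (n w : ℕ) : MvPolynomial (Fin 4) R :=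
  X 0 ^ (n - (w + 2) / 3) * X 1 ^ (w % 3 % 2) * X 2 ^ (w % 3 / 2) * X 3 ^ (w / 3)

theorem weight_apply (m : Fin 4 →₀ ℕ) : weight m = m 1 + 2 * m 2 + 3 * m 3 := by
  simp [weight, Finsupp.weight_apply, Finsupp.sum_fintype, Fin.sum_univ_four, mul_comm]

theorem weight_le (m : Fin 4 →₀ ℕ) : weight m ≤ 3 * m.degree := by
  rw [weight_apply, Finsupp.degree_eq_sum, Fin.sum_univ_four]
  omega

theorem eq_single_of_weight_eq {m : Fin 4 →₀ ℕ} {n : ℕ} (hm : m.degree = n)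
    (hw : weight m = 3 * n) : m = Finsupp.single 3 n := by
  rw [weight_apply] at hw
  rw [Finsupp.degree_eq_sum, Fin.sum_univ_four] at hm
  ext i
  fin_cases i <;> simp <;> omega

variable {R}

theorem param_monomial (m : Fin 4 →₀ ℕ) (c : R) :
    param R (monomial m c) = Polynomial.C c * Polynomial.X ^ weight m := by
  simp [param, aeval_monomial, Finsupp.prod_fintype, Fin.prod_univ_four, weight_apply,
    ← pow_mul, ← pow_add]

theorem param_stdMonomial (n w : ℕ) : param R (stdMonomial R n w) = Polynomial.X ^ w := by
  have hw : w % 3 % 2 + 2 * (w % 3 / 2) + 3 * (w / 3) = w := by omega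
  conv_rhs => rw [← hw]
  simp [param, stdMonomial, pow_add, pow_mul]

theorem eval_param (z : R) (g : MvPolynomial (Fin 4) R) :
    (param R g).eval z = eval (fun i : Fin 4 => z ^ (i : ℕ)) g := by
  rw [param, ← Polynomial.coe_aeval_eq_eval, ← AlgHom.comp_apply, comp_aeval,
    ← coe_aeval_eq_eval]
  simp

/-- Each relation lowers `b + c`; once `b + c ≤ 1` the monomial is already the standard one. -/
theorem pow_mul_eq_of_relations {A : Type*} [CommSemiring A] {y : Fin 4 → A}
    (h₁ : y 1 ^ 2 = y 0 * y 2) (h₂ : y 2 ^ 2 = y 1 * y 3) (h₃ : y 1 * y 2 = y 0 * y 3)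
    {a b c e n w : ℕ} (hn : a + b + c + e = n) (hw : b + 2 * c + 3 * e = w) :
    y 0 ^ a * y 1 ^ b * y 2 ^ c * y 3 ^ e =
      y 0 ^ (n - (w + 2) / 3) * y 1 ^ (w % 3 % 2) * y 2 ^ (w % 3 / 2) * y 3 ^ (w / 3) := by
  induction hk : b + c using Nat.strong_induction_on generalizing a b c e with
  | _ k ih =>
  subst hk
  rcases le_or_gt 2 b with hb | hb
  · obtain ⟨b, rfl⟩ := Nat.exists_eq_add_of_le' hb
    rw [← ih (b + c + 1) (by omega) (a := a + 1) (c := c + 1) (e := e) (by omega) (by omega) rfl,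
      pow_add, h₁]
    ring
  rcases le_or_gt 2 c with hc | hc
  · obtain ⟨c, rfl⟩ := Nat.exists_eq_add_of_le' hc
    rw [← ih (b + 1 + c) (by omega) (a := a) (b := b + 1) (c := c) (e := e + 1) (by omega)
      (by omega) rfl, pow_add (y 2), h₂]
    ring
  by_cases hbc : 1 ≤ b ∧ 1 ≤ c
  · obtain ⟨b, rfl⟩ := Nat.exists_eq_add_of_le' hbc.1
    obtain ⟨c, rfl⟩ := Nat.exists_eq_add_of_le' hbc.2
    rw [← ih (b + c) (by omega) (a := a + 1) (e := e + 1) (by omega) (by omega) rfl,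
      show y 0 ^ a * y 1 ^ (b + 1) * y 2 ^ (c + 1) * y 3 ^ e =
        y 0 ^ a * y 1 ^ b * y 2 ^ c * y 3 ^ e * (y 1 * y 2) by ring, h₃]
    ring
  rw [show n - (w + 2) / 3 = a by omega, show w % 3 % 2 = b by omega,
    show w % 3 / 2 = c by omega, show w / 3 = e by omega]

variable (R)

theorem monomial_one_sub_stdMonomial_mem (m : Fin 4 →₀ ℕ) :
    monomial m 1 - stdMonomial R m.degree (weight m) ∈ ideal R := by
  have rel {f g : MvPolynomial (Fin 4) R} (h : f - g ∈ ({X 0 * X 2 - X 1 ^ 2,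
      X 1 * X 3 - X 2 ^ 2, X 0 * X 3 - X 1 * X 2} : Set _)) :
      Ideal.Quotient.mk (ideal R) f = Ideal.Quotient.mk (ideal R) g :=
    Ideal.Quotient.eq.mpr (Ideal.subset_span h)
  have h₁ := (rel (f := X 0 * X 2) (g := X 1 ^ 2) (by simp)).symm
  have h₂ := (rel (f := X 1 * X 3) (g := X 2 ^ 2) (by simp)).symm
  have h₃ := (rel (f := X 0 * X 3) (g := X 1 * X 2) (by simp)).symm
  simp only [map_mul, map_pow] at h₁ h₂ h₃
  rw [← Ideal.Quotient.eq, monomial_eq, C_1, one_mul,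
    Finsupp.prod_fintype _ _ fun _ => pow_zero _, Fin.prod_univ_four, stdMonomial]
  simp only [map_mul, map_pow]
  exact pow_mul_eq_of_relations (y := fun i => Ideal.Quotient.mk (ideal R) (X i)) h₁ h₂ h₃
    (by rw [Finsupp.degree_eq_sum, Fin.sum_univ_four]) (weight_apply m).symm

theorem isHomogeneous_stdMonomial {n w : ℕ} (hw : w ≤ 3 * n) :
    (stdMonomial R n w).IsHomogeneous n := by
  have := (((isHomogeneous_X_pow (R := R) (0 : Fin 4) (n - (w + 2) / 3)).mul
    (isHomogeneous_X_pow 1 (w % 3 % 2))).mul (isHomogeneous_X_pow 2 (w % 3 / 2))).mul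
    (isHomogeneous_X_pow 3 (w / 3))
  rw [stdMonomial]
  convert this using 1
  omega

def lift (n : ℕ) : R[X] →ₗ[R] MvPolynomial (Fin 4) R :=
  ∑ w ∈ Finset.range (3 * n + 1), (Polynomial.lcoeff R w).smulRight (stdMonomial R n w)

variable {R}

theorem lift_apply (n : ℕ) (r : R[X]) :
    lift R n r = ∑ w ∈ Finset.range (3 * n + 1), r.coeff w • stdMonomial R n w := by
  simp [lift]

theorem isHomogeneous_lift (n : ℕ) (r : R[X]) : (lift R n r).IsHomogeneous n := by
  rw [lift_apply]
  exact Submodule.sum_mem (homogeneousSubmodule _ R n) fun w hw =>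
    Submodule.smul_mem _ _ (isHomogeneous_stdMonomial R (by simpa [Nat.lt_succ_iff] using hw))

theorem param_lift {n : ℕ} {r : R[X]} (hr : r.natDegree ≤ 3 * n) : param R (lift R n r) = r := by
  conv_rhs => rw [Polynomial.as_sum_range' r (3 * n + 1) (by omega)]
  simp [lift_apply, param_stdMonomial, Polynomial.smul_X_eq_monomial]

theorem lift_X_pow {n w : ℕ} (hw : w ≤ 3 * n) :
    lift R n (Polynomial.X ^ w) = stdMonomial R n w := by
  simp [lift_apply, Polynomial.coeff_X_pow, ite_smul, hw]

theorem sub_lift_param_mem {g : MvPolynomial (Fin 4) R} {n : ℕ} (hg : g.IsHomogeneous n) :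
    g - lift R n (param R g) ∈ ideal R := by
  rw [← support_sum_monomial_coeff g, map_sum, map_sum, ← Finset.sum_sub_distrib]
  refine Ideal.sum_mem _ fun m hm => ?_
  have hdeg := hg.degree_of_mem_support hm
  rw [param_monomial, ← Polynomial.smul_eq_C_mul, map_smul, lift_X_pow (hdeg ▸ weight_le m)]
  have := Submodule.smul_of_tower_mem _ (coeff m g) (monomial_one_sub_stdMonomial_mem R m)
  rwa [smul_sub, smul_monomial, smul_eq_mul, mul_one, hdeg] at this

theorem mem_ideal_of_param_eq_zero {g : MvPolynomial (Fin 4) R} {n : ℕ} (hg : g.IsHomogeneous n)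
    (h : param R g = 0) : g ∈ ideal R := by
  simpa [h] using sub_lift_param_mem hg

theorem param_eq_sum (g : MvPolynomial (Fin 4) R) :
    param R g = ∑ m ∈ g.support, Polynomial.C (coeff m g) * Polynomial.X ^ weight m := by
  conv_lhs => rw [← support_sum_monomial_coeff g]
  rw [map_sum]
  exact Finset.sum_congr rfl fun m _ => param_monomial m _

theorem natDegree_param_le {g : MvPolynomial (Fin 4) R} {n : ℕ} (hg : g.IsHomogeneous n) :
    (param R g).natDegree ≤ 3 * n := by
  rw [param_eq_sum]
  refine Polynomial.natDegree_sum_le_of_forall_le _ _ fun m hm => ?_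
  exact (Polynomial.natDegree_C_mul_X_pow_le _ _).trans
    (hg.degree_of_mem_support hm ▸ weight_le m)

theorem coeff_param_three_mul {g : MvPolynomial (Fin 4) R} {n : ℕ} (hg : g.IsHomogeneous n) :
    (param R g).coeff (3 * n) = coeff (Finsupp.single 3 n) g := by
  rw [param_eq_sum, Polynomial.finsetSum_coeff]
  simp only [Polynomial.coeff_C_mul_X_pow]
  rw [Finset.sum_eq_single (Finsupp.single 3 n)]
  · simp [weight_apply]
  · intro m hm hne
    rw [if_neg fun h => hne (eq_single_of_weight_eq (hg.degree_of_mem_support hm) h.symm)]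
  · intro h
    simp [notMem_support_iff.mp h]

section Field

variable {K : Type*} [Field K]

theorem mem_ideal_sup_span_pair {P G Q : MvPolynomial (Fin 4) K} {a b n : ℕ}
    (hP : P.IsHomogeneous a) (hG : G.IsHomogeneous b) (hGdeg : (param K G).degree = (3 * b : ℕ))
    (hcop : IsCoprime (param K P) (param K G)) (hQ : Q.IsHomogeneous n) (habn : a + b ≤ n) :
    Q ∈ ideal K ⊔ Ideal.span {P, G} := by
  obtain ⟨u, v, huv, hu, hv⟩ := Polynomial.exists_eq_mul_add_mul_natDegree_le hcop
    (Polynomial.ne_zero_of_coe_le_degree hGdeg.ge) (natDegree_param_le hP)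
    (Polynomial.natDegree_eq_of_degree_eq_some hGdeg) (natDegree_param_le hQ) (by omega)
  set Q₀ := P * lift K (n - a) u + G * lift K (n - b) v
  have hQ₀ : Q₀.IsHomogeneous n := by
    refine .add ?_ ?_
    · convert hP.mul (isHomogeneous_lift (n - a) u) using 1; omega
    · convert hG.mul (isHomogeneous_lift (n - b) v) using 1; omega
  have hQQ₀ : Q - Q₀ ∈ ideal K := by
    refine mem_ideal_of_param_eq_zero (hQ.sub hQ₀) ?_
    rw [map_sub, map_add, map_mul, map_mul, param_lift (by omega), param_lift (by omega), huv,
      sub_self]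
  rw [← sub_add_cancel Q Q₀]
  refine Ideal.add_mem _ (Ideal.mem_sup_left hQQ₀) (Ideal.mem_sup_right ?_)
  exact Ideal.add_mem _ (Ideal.mul_mem_right _ _ (Ideal.subset_span (by simp)))
    (Ideal.mul_mem_right _ _ (Ideal.subset_span (by simp)))

theorem exists_linearCombination_param_isCoprime [IsAlgClosed K] {n : ℕ}
    {f : Fin 4 → MvPolynomial (Fin 4) K} (hf : ∀ j, (f j).IsHomogeneous n)
    (hf₀ : ∀ x : Fin 4 → K, (∀ j, eval x (f j) = 0) → x = 0) {p : K[X]} (hp : p ≠ 0) :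
    ∃ c : Fin 4 → K, (param K (Fintype.linearCombination K f c)).degree = (3 * n : ℕ) ∧
      IsCoprime p (param K (Fintype.linearCombination K f c)) := by
  classical
  -- `none` stands for the point `[0:0:0:1]` of the curve, `some z` for `[1:z:z²:z³]`.
  let φ : Option p.roots.toFinset → Module.Dual K (MvPolynomial (Fin 4) K)
    | none => Polynomial.lcoeff K (3 * n) ∘ₗ (param K).toLinearMap
    | some z => Polynomial.leval z.1 ∘ₗ (param K).toLinearMap
  have hφ : ∀ i, ∃ j, φ i (f j) ≠ 0 := by
    rintro (_ | ⟨z, -⟩)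
    · by_contra! h
      have := hf₀ (Pi.single 3 1) fun j => by
        simpa [φ, (hf j).eval_piSingle_one, coeff_param_three_mul (hf j)] using h j
      simpa using congrFun this 3
    · by_contra! h
      have := hf₀ (fun i => z ^ (i : ℕ)) fun j => by simpa [φ, eval_param] using h j
      simpa using congrFun this 0
  obtain ⟨c, hc⟩ := Module.Dual.exists_linearCombination_forall_ne_zero f φ hφ
  refine ⟨c, Polynomial.degree_eq_of_le_of_coeff_ne_zero (Polynomial.degree_le_of_natDegree_le
    (natDegree_param_le (isHomogeneous_linearCombination hf c))) (hc none), ?_⟩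
  rw [Polynomial.isCoprime_iff_aeval_ne_zero_of_isAlgClosed K K]
  intro z
  by_cases hz : p.IsRoot z
  · exact .inr (by simpa [φ] using hc (some ⟨z, by simpa [hp] using hz⟩))
  · exact .inl (by simpa using hz)

end Field

end TwistedCubic

end

theorem degree_bound_outside_twisted_cubic_general (d : ℕ)
    (IC : Ideal (MvPolynomial (Fin 4) ℂ))
    (hIC : IC = Ideal.span {X 0 * X 2 - X 1 ^ 2, X 1 * X 3 - X 2 ^ 2, X 0 * X 3 - X 1 * X 2})
    (F : MvPolynomial (Fin 4) ℂ) (hF : F.IsHomogeneous d)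
    (hsm : ∀ x : Fin 4 → ℂ, (∀ j, eval x (pderiv j F) = 0) → x = 0)
    (T : Ideal (MvPolynomial (Fin 4) ℂ))
    (hICT : IC ≤ T)
    (hJT : Ideal.span (Set.range fun j : Fin 4 => pderiv j F) ≤ T)
    (socT : Module.finrank ℂ
      (Submodule.map (Ideal.Quotient.mkₐ ℂ T).toLinearMap
        (homogeneousSubmodule (Fin 4) ℂ (2 * d - 4))) = 1)
    (P : MvPolynomial (Fin 4) ℂ) (e : ℕ) (hPhom : P.IsHomogeneous e)
    (hPT : P ∈ T) (hPC : P ∉ IC) :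
    d - 3 ≤ e := by
  subst hIC
  by_contra! he
  have hP : TwistedCubic.param ℂ P ≠ 0 := fun h =>
    hPC (TwistedCubic.mem_ideal_of_param_eq_zero hPhom h)
  have hJ (j : Fin 4) : (pderiv j F).IsHomogeneous (d - 1) := hF.pderiv
  obtain ⟨c, hGdeg, hcop⟩ := TwistedCubic.exists_linearCombination_param_isCoprime hJ hsm hP
  set G := Fintype.linearCombination ℂ (fun j => pderiv j F) c
  have hGT : G ∈ T := hJT <| by
    simp only [G, Fintype.linearCombination_apply]
    exact Ideal.sum_mem _ fun j _ => Submodule.smul_of_tower_mem _ _ (Ideal.subset_span ⟨j, rfl⟩)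
  have hT : TwistedCubic.ideal ℂ ⊔ Ideal.span {P, G} ≤ T :=
    sup_le hICT (Ideal.span_le.mpr (by simp [Set.insert_subset_iff, hPT, hGT]))
  have hbot : Submodule.map (Ideal.Quotient.mkₐ ℂ T).toLinearMap
      (homogeneousSubmodule (Fin 4) ℂ (2 * d - 4)) = ⊥ := by
    rw [eq_bot_iff, Submodule.map_le_iff_le_comap]
    intro Q hQ
    simpa [Ideal.Quotient.eq_zero_iff_mem] using hT (TwistedCubic.mem_ideal_sup_span_pair hPhom
      (isHomogeneous_linearCombination hJ c) hGdeg hcop hQ (by omega))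
  rw [hbot, finrank_bot] at socT
  exact zero_ne_one socT

/-- Let `I(C₁) ⊂ S = ℂ[X₀,…,X₃]` be the ideal of the twisted cubic (the three quadric minors)
and `T ⊇ I(C₁)` a graded ideal such that `S/T` is Artinian Gorenstein of socle degree `2d - 4`
(degree-`(2d-4)` piece one-dimensional, higher pieces zero, pairings nondegenerate) and `T`
contains the Jacobian ideal `J_F` of a smooth degree-`d` surface `{F = 0}` containing the
twisted cubic.  If `P ∈ T` is homogeneous of degree `e` with `P ∉ I(C₁)`, then `e ≥ d - 3`. -/
theorem degree_bound_outside_twisted_cubic (d : ℕ) (hd : 5 ≤ d)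
    (IC : Ideal (MvPolynomial (Fin 4) ℂ))
    (hIC : IC = Ideal.span {X 0 * X 2 - X 1 ^ 2, X 1 * X 3 - X 2 ^ 2, X 0 * X 3 - X 1 * X 2})
    (F : MvPolynomial (Fin 4) ℂ) (hF : F.IsHomogeneous d)
    (hsm : ∀ x : Fin 4 → ℂ, (∀ j, eval x (pderiv j F) = 0) → x = 0)
    (hFC : F ∈ IC)
    (T : Ideal (MvPolynomial (Fin 4) ℂ))
    (hThom : ∀ p ∈ T, ∀ k : ℕ, homogeneousComponent k p ∈ T)
    (hICT : IC ≤ T)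
    (hJT : Ideal.span (Set.range fun j : Fin 4 => pderiv j F) ≤ T)
    (socT : Module.finrank ℂ
      (Submodule.map (Ideal.Quotient.mkₐ ℂ T).toLinearMap
        (homogeneousSubmodule (Fin 4) ℂ (2 * d - 4))) = 1)
    (vanT : ∀ k : ℕ, 2 * d - 4 < k →
      ∀ p : MvPolynomial (Fin 4) ℂ, p.IsHomogeneous k → p ∈ T)
    (perfT : ∀ k, k ≤ 2 * d - 4 → ∀ p : MvPolynomial (Fin 4) ℂ, p.IsHomogeneous k →
      (∀ q : MvPolynomial (Fin 4) ℂ, q.IsHomogeneous (2 * d - 4 - k) → p * q ∈ T) → p ∈ T)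
    (P : MvPolynomial (Fin 4) ℂ) (e : ℕ) (hPhom : P.IsHomogeneous e)
    (hPT : P ∈ T) (hPC : P ∉ IC) :
    d - 3 ≤ e :=
  degree_bound_outside_twisted_cubic_general d IC hIC F hF hsm T hICT hJT socT P e hPhom hPT hPC
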